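/- arXiv:2001.00523 — 6 statements merged into one kernel-verified Lean document; each statement's English description precedes it below -/
import Mathlib

section
/- Let (T_s)_{s∈S} be a bounded representation of a commutative monoid (S,+) on a Banach space E. Then the following are equivalent: (i) the net (T_s)_{s∈S} converges to the zero operator in the operator norm; (ii) there exists s₀ ∈ S such that ‖T_{s₀}‖ < 1; (iii) the zero operator is contained in the operator-norm closure of the set {T_s : s ∈ S}. -/
open Filter Topology

/-- The pre-order on a commutative monoid `S`: `s ≤ t` iff `t = s + r` for some `r ∈ S`. -/
def sgLE {S : Type*} [AddCommMonoid S] (s t : S) : Prop := ∃ r : S, t = s + r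

/-- The filter of "tails" of the directed set `(S, sgLE)`; convergence of the net `(T_s)_{s ∈ S}`
is convergence along this filter. -/
def sgFilter (S : Type*) [AddCommMonoid S] : Filter S :=
  ⨅ s : S, Filter.principal {t | sgLE s t}

/-! If `‖T s₀‖ < 1`, then on the tail `{t | n • s₀ ≤ t}` we have `‖T t‖ ≤ ‖T s₀‖ ^ n * sup ‖T‖`,
which tends to `0`. Conversely, an element of `{T s}` within distance `1` of `0` has norm `< 1`. -/

section sgFilter

variable {S : Type*} [AddCommMonoid S]

lemma sgLE_refl (s : S) : sgLE s s := ⟨0, (add_zero s).symm⟩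

lemma sgFilter_hasBasis : (sgFilter S).HasBasis (fun _ => True) fun s => {t | sgLE s t} := by
  refine hasBasis_iInf_principal fun a b => ⟨a + b, ?_, ?_⟩ <;> rintro t ⟨r, rfl⟩
  · exact ⟨b + r, by abel⟩
  · exact ⟨a + r, by abel⟩

instance sgFilter_neBot : (sgFilter S).NeBot :=
  sgFilter_hasBasis.neBot_iff.mpr fun {s} _ => ⟨s, sgLE_refl s⟩

lemma mem_closure_range_of_tendsto_sgFilter {X : Type*} [TopologicalSpace X] {f : S → X} {x : X}
    (h : Tendsto f (sgFilter S) (𝓝 x)) : x ∈ closure (Set.range f) :=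
  mem_closure_of_tendsto h (Eventually.of_forall Set.mem_range_self)

end sgFilter

section NormedRing

variable {S R : Type*} [AddCommMonoid S] [SeminormedRing R] {T : S → R}

lemma norm_nsmul_add_le (hTmul : ∀ s t : S, T (s + t) = T s * T t) {M : ℝ}
    (hM : ∀ s, ‖T s‖ ≤ M) (s₀ r : S) (n : ℕ) : ‖T (n • s₀ + r)‖ ≤ ‖T s₀‖ ^ n * M := by
  induction n with
  | zero => simpa using hM r
  | succ n ih =>
    calc ‖T ((n + 1) • s₀ + r)‖ = ‖T s₀ * T (n • s₀ + r)‖ := by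
          rw [← hTmul, succ_nsmul', add_assoc]
      _ ≤ ‖T s₀‖ * (‖T s₀‖ ^ n * M) := norm_mul_le_of_le le_rfl ih
      _ = ‖T s₀‖ ^ (n + 1) * M := by ring

lemma tendsto_sgFilter_zero_of_norm_lt_one (hTmul : ∀ s t : S, T (s + t) = T s * T t)
    (hbdd : ∃ M : ℝ, ∀ s, ‖T s‖ ≤ M) {s₀ : S} (hs₀ : ‖T s₀‖ < 1) :
    Tendsto T (sgFilter S) (𝓝 0) := by
  obtain ⟨M, hM⟩ := hbdd
  rw [sgFilter_hasBasis.tendsto_iff Metric.nhds_basis_ball]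
  intro ε hε
  have hpow : Tendsto (fun n : ℕ => ‖T s₀‖ ^ n * M) atTop (𝓝 0) := by
    simpa using (tendsto_pow_atTop_nhds_zero_of_lt_one (norm_nonneg _) hs₀).mul_const M
  obtain ⟨n, hn⟩ := (hpow.eventually (gt_mem_nhds hε)).exists
  refine ⟨n • s₀, trivial, ?_⟩
  rintro t ⟨r, rfl⟩
  rw [mem_ball_zero_iff]
  exact (norm_nsmul_add_le hTmul hM s₀ r n).trans_lt hn

end NormedRing

lemma exists_norm_lt_one_of_zero_mem_closure {ι R : Type*} [SeminormedAddGroup R] {T : ι → R}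
    (h : (0 : R) ∈ closure (Set.range T)) : ∃ i, ‖T i‖ < 1 := by
  obtain ⟨i, hi⟩ := Metric.mem_closure_range_iff.mp h 1 one_pos
  exact ⟨i, by simpa using hi⟩

theorem statement0_general {E : Type*} [NormedAddCommGroup E] [NormedSpace ℝ E]
    {S : Type*} [AddCommMonoid S] (T : S → E →L[ℝ] E)
    (hTmul : ∀ s t : S, T (s + t) = T s * T t)
    (hbdd : ∃ M : ℝ, ∀ s : S, ‖T s‖ ≤ M) :
    List.TFAE [
      Tendsto T (sgFilter S) (𝓝 0),
      ∃ s₀ : S, ‖T s₀‖ < 1,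
      (0 : E →L[ℝ] E) ∈ closure (Set.range T)] := by
  tfae_have 1 → 3 := mem_closure_range_of_tendsto_sgFilter
  tfae_have 3 → 2 := exists_norm_lt_one_of_zero_mem_closure
  tfae_have 2 → 1 := fun ⟨_, hs₀⟩ => tendsto_sgFilter_zero_of_norm_lt_one hTmul hbdd hs₀
  tfae_finish

/-- For a bounded representation `(T_s)_{s∈S}` of a commutative monoid `(S,+)`
on a Banach space `E`, the following are equivalent: (i) the net `(T_s)` converges to `0` in the
operator norm; (ii) `‖T_{s₀}‖ < 1` for some `s₀`; (iii) `0` lies in the operator-norm closure of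
`{T_s : s ∈ S}`. -/
theorem statement0 {E : Type*} [NormedAddCommGroup E] [NormedSpace ℝ E] [CompleteSpace E]
    {S : Type*} [AddCommMonoid S] (T : S → E →L[ℝ] E)
    (hT0 : T 0 = 1) (hTmul : ∀ s t : S, T (s + t) = T s * T t)
    (hbdd : ∃ M : ℝ, ∀ s : S, ‖T s‖ ≤ M) :
    List.TFAE [
      Tendsto T (sgFilter S) (𝓝 0),
      ∃ s₀ : S, ‖T s₀‖ < 1,
      (0 : E →L[ℝ] E) ∈ closure (Set.range T)] :=
  statement0_general T hTmul hbdd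
end

section
/- Let (T_s)_{s∈S} be a bounded representation of a commutative monoid (S,+) on a Banach space E. The following are equivalent: (i) the net (T_s)_{s∈S} converges in the operator norm; (ii) the semigroup at infinity 𝒯_∞ is a singleton; (iii) 𝒯_∞ is non-empty and compact and every R ∈ 𝒯_∞ acts as the identity on E_∞ (the range of the projection at infinity P_∞); (iv) 𝒯_∞ is non-empty and compact and every T_s acts as the identity on E_∞. If these hold, then the limit of (T_s)_{s∈S} equals P_∞. -/
open Filter Topology

/-- The semigroup at infinity with respect to the operator norm:
`𝒯_∞ = ⋂_{r ∈ S} closure {T_s : s ≥ r}`. -/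
def sgAtInfty {E : Type*} [NormedAddCommGroup E] [NormedSpace ℝ E]
    {S : Type*} [AddCommMonoid S] (T : S → E →L[ℝ] E) : Set (E →L[ℝ] E) :=
  ⋂ r : S, closure (T '' {s | sgLE r s})

/-- `P` is the neutral element of the semigroup at infinity (the projection at infinity). -/
def IsNeutralAtInfty {E : Type*} [NormedAddCommGroup E] [NormedSpace ℝ E]
    {S : Type*} [AddCommMonoid S] (T : S → E →L[ℝ] E) (P : E →L[ℝ] E) : Prop :=
  P ∈ sgAtInfty T ∧ ∀ A ∈ sgAtInfty T, P * A = A ∧ A * P = A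

namespace Stmt2Aux

variable {E : Type*} [NormedAddCommGroup E] [NormedSpace ℝ E] [CompleteSpace E]
variable {S : Type*} [AddCommMonoid S]

lemma sgLE_refl (s : S) : sgLE s s := ⟨0, (add_zero s).symm⟩

lemma sgLE_trans {a b c : S} (h1 : sgLE a b) (h2 : sgLE b c) : sgLE a c := by
  obtain ⟨r, rfl⟩ := h1; obtain ⟨r', rfl⟩ := h2; exact ⟨r + r', add_assoc _ _ _⟩

lemma sgLE_add_left (s t : S) : sgLE s (s + t) := ⟨t, rfl⟩

lemma sgLE_add_right (s t : S) : sgLE t (s + t) := ⟨s, add_comm s t⟩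

lemma sgDirected : Directed (· ≥ ·) (fun s : S => Filter.principal {t | sgLE s t}) := by
  intro a b
  exact ⟨a + b, Filter.principal_mono.2 fun t ht => sgLE_trans (sgLE_add_left a b) ht,
    Filter.principal_mono.2 fun t ht => sgLE_trans (sgLE_add_right a b) ht⟩

lemma mem_sgFilter_iff {U : Set S} : U ∈ sgFilter S ↔ ∃ s : S, ∀ t, sgLE s t → t ∈ U := by
  haveI : Nonempty S := ⟨0⟩
  rw [sgFilter, Filter.mem_iInf_of_directed sgDirected]
  simp only [Filter.mem_principal]
  exact ⟨fun ⟨s, hs⟩ => ⟨s, fun t ht => hs ht⟩, fun ⟨s, hs⟩ => ⟨s, fun t ht => hs t ht⟩⟩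

lemma tendsto_iff {T : S → E →L[ℝ] E} {L : E →L[ℝ] E} :
    Tendsto T (sgFilter S) (𝓝 L) ↔ ∀ ε > 0, ∃ s : S, ∀ t, sgLE s t → ‖T t - L‖ < ε := by
  rw [Metric.tendsto_nhds]
  constructor
  · intro h ε hε
    obtain ⟨s, hs⟩ := mem_sgFilter_iff.1 (h ε hε)
    exact ⟨s, fun t ht => by simpa [dist_eq_norm] using hs t ht⟩
  · intro h ε hε
    obtain ⟨s, hs⟩ := h ε hε
    have : {x | dist (T x) L < ε} ∈ sgFilter S :=
      mem_sgFilter_iff.2 ⟨s, fun t ht => by simpa [dist_eq_norm] using hs t ht⟩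
    exact this

lemma mem_atInfty_iff {T : S → E →L[ℝ] E} {A : E →L[ℝ] E} :
    A ∈ sgAtInfty T ↔ ∀ r : S, ∀ ε > 0, ∃ t, sgLE r t ∧ ‖T t - A‖ < ε := by
  simp only [sgAtInfty, Set.mem_iInter, Metric.mem_closure_iff]
  constructor
  · intro h r ε hε
    obtain ⟨b, ⟨t, ht, rfl⟩, hb⟩ := h r ε hε
    exact ⟨t, ht, by rwa [dist_eq_norm, norm_sub_rev] at hb⟩
  · intro h r ε hε
    obtain ⟨t, ht, h'⟩ := h r ε hε
    exact ⟨T t, ⟨t, ht, rfl⟩, by rwa [dist_eq_norm, norm_sub_rev]⟩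

lemma small {C : ℝ} (hC : 0 ≤ C) {ε : ℝ} (hε : 0 < ε) : ∃ δ > 0, δ * C < ε := by
  refine ⟨ε / (C + 1), by positivity, ?_⟩
  calc ε / (C + 1) * C < ε / (C + 1) * (C + 1) := by
        apply mul_lt_mul_of_pos_left (by linarith) (by positivity)
    _ = ε := div_mul_cancel₀ ε (by positivity)

lemma eq_of_norm_sub_lt {A B : E →L[ℝ] E} (h : ∀ ε > 0, ‖A - B‖ < ε) : A = B := by
  have h0 : ‖A - B‖ ≤ 0 := le_of_forall_pos_le_add fun ε hε => by
    simpa using (h ε hε).le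
  rw [← sub_eq_zero]
  exact norm_le_zero_iff.1 h0

section bounded

variable {T : S → E →L[ℝ] E} {M : ℝ}
variable (hTmul : ∀ s t : S, T (s + t) = T s * T t) (hM : ∀ s : S, ‖T s‖ ≤ M) (hM0 : 0 ≤ M)

include hTmul hM hM0

lemma mul_mem {A B : E →L[ℝ] E} (hA : A ∈ sgAtInfty T) (hB : B ∈ sgAtInfty T) :
    A * B ∈ sgAtInfty T := by
  rw [mem_atInfty_iff] at *
  intro r ε hε
  obtain ⟨δ, hδ, hδε⟩ := small (by positivity : (0:ℝ) ≤ M + ‖B‖) hε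
  obtain ⟨s, hrs, hs⟩ := hA r δ hδ
  obtain ⟨t, _, ht⟩ := hB 0 δ hδ
  refine ⟨s + t, sgLE_trans hrs (sgLE_add_left s t), ?_⟩
  have key : T (s + t) - A * B = T s * (T t - B) + (T s - A) * B := by
    rw [hTmul]; noncomm_ring
  calc ‖T (s + t) - A * B‖ = ‖T s * (T t - B) + (T s - A) * B‖ := by rw [key]
    _ ≤ ‖T s * (T t - B)‖ + ‖(T s - A) * B‖ := norm_add_le _ _
    _ ≤ ‖T s‖ * ‖T t - B‖ + ‖T s - A‖ * ‖B‖ := add_le_add (norm_mul_le _ _) (norm_mul_le _ _)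
    _ ≤ M * δ + δ * ‖B‖ := by
        have h1 := hM s
        have h2 := norm_nonneg (T t - B)
        have h3 := norm_nonneg B
        nlinarith [hs.le, ht.le, norm_nonneg (T s - A)]
    _ = δ * (M + ‖B‖) := by ring
    _ < ε := hδε

lemma T_mul_mem {A : E →L[ℝ] E} (hA : A ∈ sgAtInfty T) (s : S) :
    T s * A ∈ sgAtInfty T := by
  rw [mem_atInfty_iff] at *
  intro r ε hε
  obtain ⟨δ, hδ, hδε⟩ := small hM0 hε
  obtain ⟨t, hrt, ht⟩ := hA r δ hδ
  refine ⟨s + t, sgLE_trans hrt (sgLE_add_right s t), ?_⟩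
  have key : T (s + t) - T s * A = T s * (T t - A) := by rw [hTmul]; noncomm_ring
  calc ‖T (s + t) - T s * A‖ = ‖T s * (T t - A)‖ := by rw [key]
    _ ≤ ‖T s‖ * ‖T t - A‖ := norm_mul_le _ _
    _ ≤ δ * M := by
        have := hM s; have := norm_nonneg (T t - A)
        nlinarith [ht.le]
    _ < ε := hδε

lemma comm_T {A : E →L[ℝ] E} (hA : A ∈ sgAtInfty T) (s : S) :
    A * T s = T s * A := by
  apply eq_of_norm_sub_lt
  intro ε hε
  obtain ⟨δ, hδ, hδε⟩ := small (by positivity : (0:ℝ) ≤ M + M) hε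
  obtain ⟨t, _, ht⟩ := (mem_atInfty_iff.1 hA) 0 δ hδ
  have hcomm : T t * T s = T s * T t := by rw [← hTmul, ← hTmul, add_comm]
  have key : A * T s - T s * A = (A - T t) * T s - T s * (A - T t) := by
    have : (A - T t) * T s - T s * (A - T t)
        = A * T s - T s * A - (T t * T s - T s * T t) := by noncomm_ring
    rw [this, hcomm]; simp
  calc ‖A * T s - T s * A‖ = ‖(A - T t) * T s - T s * (A - T t)‖ := by rw [key]
    _ ≤ ‖(A - T t) * T s‖ + ‖T s * (A - T t)‖ := norm_sub_le _ _
    _ ≤ ‖A - T t‖ * ‖T s‖ + ‖T s‖ * ‖A - T t‖ := add_le_add (norm_mul_le _ _) (norm_mul_le _ _)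
    _ ≤ δ * (M + M) := by
        have h1 := hM s
        have h2 : ‖A - T t‖ < δ := by rwa [norm_sub_rev]
        nlinarith [norm_nonneg (T s), norm_nonneg (A - T t)]
    _ < ε := hδε

lemma mul_T_mem {A : E →L[ℝ] E} (hA : A ∈ sgAtInfty T) (s : S) :
    A * T s ∈ sgAtInfty T := by
  rw [comm_T hTmul hM hM0 hA s]
  exact T_mul_mem hTmul hM hM0 hA s

/-- Any idempotent of `𝒯_∞` is a neutral element. -/
lemma neutral_of_idem {e : E →L[ℝ] E} (he : e ∈ sgAtInfty T) (hee : e * e = e) :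
    IsNeutralAtInfty T e := by
  refine ⟨he, fun A hA => ?_⟩
  have hmain : e * A = A := by
    apply eq_of_norm_sub_lt
    intro ε hε
    have hC : (0:ℝ) ≤ ‖e‖ + (‖e‖ + 1) * M + 1 := by positivity
    obtain ⟨δ, hδ, hδε⟩ := small hC hε
    obtain ⟨s, _, hs⟩ := (mem_atInfty_iff.1 he) 0 δ hδ
    obtain ⟨t, ⟨u, rfl⟩, ht⟩ := (mem_atInfty_iff.1 hA) s δ hδ
    -- ‖e * T s - T s‖ ≤ (‖e‖+1) δ
    have h1 : ‖e * T s - T s‖ ≤ (‖e‖ + 1) * δ := by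
      have key : e * T s - T s = e * (T s - e) + (e - T s) := by
        have : e * (T s - e) + (e - T s) = e * T s - e * e + e - T s := by noncomm_ring
        rw [this, hee]; abel
      calc ‖e * T s - T s‖ = ‖e * (T s - e) + (e - T s)‖ := by rw [key]
        _ ≤ ‖e * (T s - e)‖ + ‖e - T s‖ := norm_add_le _ _
        _ ≤ ‖e‖ * ‖T s - e‖ + ‖e - T s‖ := by
            gcongr; exact norm_mul_le _ _
        _ ≤ (‖e‖ + 1) * δ := by
            have h2 : ‖e - T s‖ < δ := by rwa [norm_sub_rev]
            nlinarith [norm_nonneg e, hs.le, norm_nonneg (T s - e)]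
    -- ‖e * T (s+u) - T (s+u)‖ ≤ (‖e‖+1) δ M
    have h2 : ‖e * T (s + u) - T (s + u)‖ ≤ (‖e‖ + 1) * δ * M := by
      have key : e * T (s + u) - T (s + u) = (e * T s - T s) * T u := by
        rw [hTmul]; noncomm_ring
      calc ‖e * T (s + u) - T (s + u)‖ = ‖(e * T s - T s) * T u‖ := by rw [key]
        _ ≤ ‖e * T s - T s‖ * ‖T u‖ := norm_mul_le _ _
        _ ≤ (‖e‖ + 1) * δ * M := by
            have := hM u
            nlinarith [norm_nonneg (e * T s - T s), norm_nonneg (T u), h1,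
              mul_nonneg (add_nonneg (norm_nonneg e) zero_le_one) hδ.le]
    have key : e * A - A = e * (A - T (s + u)) + (e * T (s + u) - T (s + u))
        + (T (s + u) - A) := by noncomm_ring
    calc ‖e * A - A‖ = ‖e * (A - T (s + u)) + (e * T (s + u) - T (s + u)) + (T (s + u) - A)‖ := by
          rw [key]
      _ ≤ ‖e * (A - T (s + u))‖ + ‖e * T (s + u) - T (s + u)‖ + ‖T (s + u) - A‖ :=
          (norm_add_le _ _).trans (by gcongr; exact norm_add_le _ _)
      _ ≤ ‖e‖ * δ + (‖e‖ + 1) * δ * M + δ := by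
          have h3 : ‖A - T (s + u)‖ < δ := by rwa [norm_sub_rev]
          have h4 : ‖e * (A - T (s + u))‖ ≤ ‖e‖ * ‖A - T (s + u)‖ := norm_mul_le _ _
          nlinarith [norm_nonneg e, norm_nonneg (A - T (s + u)), ht.le]
      _ = δ * (‖e‖ + (‖e‖ + 1) * M + 1) := by ring
      _ < ε := hδε
  have hcomm : A * e = e * A := by
    apply eq_of_norm_sub_lt
    intro ε hε
    obtain ⟨δ, hδ, hδε⟩ := small (by positivity : (0:ℝ) ≤ ‖e‖ + ‖e‖) hε
    obtain ⟨t, _, ht⟩ := (mem_atInfty_iff.1 hA) 0 δ hδ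
    have hc : T t * e = e * T t := (comm_T hTmul hM hM0 he t).symm
    have key : A * e - e * A = (A - T t) * e - e * (A - T t) := by
      have : (A - T t) * e - e * (A - T t) = A * e - e * A - (T t * e - e * T t) := by
        noncomm_ring
      rw [this, hc]; simp
    calc ‖A * e - e * A‖ = ‖(A - T t) * e - e * (A - T t)‖ := by rw [key]
      _ ≤ ‖(A - T t) * e‖ + ‖e * (A - T t)‖ := norm_sub_le _ _
      _ ≤ ‖A - T t‖ * ‖e‖ + ‖e‖ * ‖A - T t‖ := add_le_add (norm_mul_le _ _) (norm_mul_le _ _)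
      _ ≤ δ * (‖e‖ + ‖e‖) := by
          have h2 : ‖A - T t‖ < δ := by rwa [norm_sub_rev]
          nlinarith [norm_nonneg e, norm_nonneg (A - T t)]
      _ < ε := hδε
  exact ⟨hmain, by rw [hcomm, hmain]⟩

/-- (i) implies (ii), with the same witness. -/
lemma atInfty_eq_singleton {L : E →L[ℝ] E} (hL : Tendsto T (sgFilter S) (𝓝 L)) :
    sgAtInfty T = {L} := by
  rw [tendsto_iff] at hL
  ext A
  simp only [Set.mem_singleton_iff]
  constructor
  · intro hA
    apply eq_of_norm_sub_lt
    intro ε hε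
    obtain ⟨s, hs⟩ := hL (ε / 2) (by positivity)
    obtain ⟨t, hst, ht⟩ := (mem_atInfty_iff.1 hA) s (ε / 2) (by positivity)
    calc ‖A - L‖ = ‖(A - T t) + (T t - L)‖ := by abel_nf
      _ ≤ ‖A - T t‖ + ‖T t - L‖ := norm_add_le _ _
      _ < ε / 2 + ε / 2 := by
          have : ‖A - T t‖ < ε / 2 := by rwa [norm_sub_rev]
          exact add_lt_add this (hs t hst)
      _ = ε := by ring
  · rintro rfl
    rw [mem_atInfty_iff]
    intro r ε hε
    obtain ⟨s, hs⟩ := hL ε hε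
    exact ⟨r + s, sgLE_add_left r s, hs (r + s) (sgLE_add_right r s)⟩

/-- Convergence follows whenever `e ∈ 𝒯_∞` absorbs the semigroup from the left. -/
lemma tendsto_of_absorb {e : E →L[ℝ] E} (he : e ∈ sgAtInfty T)
    (habs : ∀ s : S, e * T s = e) : Tendsto T (sgFilter S) (𝓝 e) := by
  rw [tendsto_iff]
  intro ε hε
  obtain ⟨δ, hδ, hδε⟩ := small hM0 hε
  obtain ⟨s, _, hs⟩ := (mem_atInfty_iff.1 he) 0 δ hδ
  refine ⟨s, ?_⟩
  rintro t ⟨u, rfl⟩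
  have key : T (s + u) - e = (T s - e) * T u := by
    rw [hTmul, sub_mul, habs u]
  calc ‖T (s + u) - e‖ = ‖(T s - e) * T u‖ := by rw [key]
    _ ≤ ‖T s - e‖ * ‖T u‖ := norm_mul_le _ _
    _ ≤ δ * M := by
        have := hM u
        nlinarith [norm_nonneg (T s - e), norm_nonneg (T u), hs.le]
    _ < ε := hδε

/-- (ii) implies (i). -/
lemma tendsto_of_singleton {A : E →L[ℝ] E} (hA : sgAtInfty T = {A}) :
    Tendsto T (sgFilter S) (𝓝 A) := by
  have hmem : A ∈ sgAtInfty T := by rw [hA]; rfl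
  apply tendsto_of_absorb hTmul hM hM0 hmem
  intro s
  have h1 : A * T s ∈ sgAtInfty T := mul_T_mem hTmul hM hM0 hmem s
  rwa [hA, Set.mem_singleton_iff] at h1

/-- 𝒯_∞ nonempty and compact gives an idempotent element. -/
lemma exists_idem (hne : (sgAtInfty T).Nonempty) (hcpt : IsCompact (sgAtInfty T)) :
    ∃ e ∈ sgAtInfty T, e * e = e := by
  exact exists_idempotent_in_compact_subsemigroup
    (fun r => continuous_mul_right r) (sgAtInfty T) hne hcpt
    (fun x hx y hy => mul_mem hTmul hM hM0 hx hy)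

end bounded

end Stmt2Aux

open Stmt2Aux in
/-- For a bounded representation `(T_s)` of a commutative monoid on a Banach
space, the following are equivalent: (i) the net `(T_s)` converges in operator norm; (ii) `𝒯_∞`
is a singleton; (iii) `𝒯_∞` is non-empty and compact and every `R ∈ 𝒯_∞` acts as the identity on
`E_∞` (the range of the projection at infinity `P_∞`); (iv) `𝒯_∞` is non-empty and compact and
every `T_s` acts as the identity on `E_∞`. In this case the limit equals `P_∞`. -/
theorem statement2 {E : Type*} [NormedAddCommGroup E] [NormedSpace ℝ E] [CompleteSpace E]
    {S : Type*} [AddCommMonoid S] (T : S → E →L[ℝ] E)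
    (hT0 : T 0 = 1) (hTmul : ∀ s t : S, T (s + t) = T s * T t)
    (hbdd : ∃ M : ℝ, ∀ s : S, ‖T s‖ ≤ M) :
    ((∃ L : E →L[ℝ] E, Tendsto T (sgFilter S) (𝓝 L)) ↔
      (∃ A : E →L[ℝ] E, sgAtInfty T = {A})) ∧
    ((∃ L : E →L[ℝ] E, Tendsto T (sgFilter S) (𝓝 L)) ↔
      ((sgAtInfty T).Nonempty ∧ IsCompact (sgAtInfty T) ∧
        ∀ P : E →L[ℝ] E, IsNeutralAtInfty T P →
          ∀ R ∈ sgAtInfty T, ∀ x : E, R (P x) = P x)) ∧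
    ((∃ L : E →L[ℝ] E, Tendsto T (sgFilter S) (𝓝 L)) ↔
      ((sgAtInfty T).Nonempty ∧ IsCompact (sgAtInfty T) ∧
        ∀ P : E →L[ℝ] E, IsNeutralAtInfty T P →
          ∀ s : S, ∀ x : E, T s (P x) = P x)) ∧
    ((∃ L : E →L[ℝ] E, Tendsto T (sgFilter S) (𝓝 L)) →
      ∀ P : E →L[ℝ] E, IsNeutralAtInfty T P → Tendsto T (sgFilter S) (𝓝 P)) := by
  obtain ⟨M₀, hM₀⟩ := hbdd
  set M : ℝ := max M₀ 0 with hMdef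
  have hM : ∀ s : S, ‖T s‖ ≤ M := fun s => (hM₀ s).trans (le_max_left _ _)
  have hM0 : (0:ℝ) ≤ M := le_max_right _ _
  -- From (i): `𝒯_∞ = {L}` and `L` is idempotent
  have hi_sing : ∀ L : E →L[ℝ] E, Tendsto T (sgFilter S) (𝓝 L) → sgAtInfty T = {L} :=
    fun L hL => atInfty_eq_singleton hTmul hM hM0 hL
  have hsing_i : ∀ A : E →L[ℝ] E, sgAtInfty T = {A} → Tendsto T (sgFilter S) (𝓝 A) :=
    fun A hA => tendsto_of_singleton hTmul hM hM0 hA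
  have hidem : ∀ L : E →L[ℝ] E, sgAtInfty T = {L} → L * L = L := by
    intro L hL
    have hmem : L ∈ sgAtInfty T := by rw [hL]; rfl
    have := mul_mem hTmul hM hM0 hmem hmem
    rwa [hL, Set.mem_singleton_iff] at this
  -- (iii)/(iv) hypotheses imply convergence
  have hcompact_i : ∀ hne : (sgAtInfty T).Nonempty, ∀ hcpt : IsCompact (sgAtInfty T),
      (∀ P : E →L[ℝ] E, IsNeutralAtInfty T P → ∀ s : S, ∀ x : E, T s (P x) = P x) →
      ∃ L : E →L[ℝ] E, Tendsto T (sgFilter S) (𝓝 L) := by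
    intro hne hcpt h4
    obtain ⟨e, he, hee⟩ := exists_idem hTmul hM hM0 hne hcpt
    have hneut := neutral_of_idem hTmul hM hM0 he hee
    have habs : ∀ s : S, e * T s = e := by
      intro s
      have hTe : T s * e = e := by
        ext x
        exact h4 e hneut s x
      rw [← comm_T hTmul hM hM0 he s] at hTe
      exact hTe
    exact ⟨e, tendsto_of_absorb hTmul hM hM0 he habs⟩
  refine ⟨?_, ?_, ?_, ?_⟩
  · -- (i) ↔ (ii)
    constructor
    · rintro ⟨L, hL⟩; exact ⟨L, hi_sing L hL⟩
    · rintro ⟨A, hA⟩; exact ⟨A, hsing_i A hA⟩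
  · -- (i) ↔ (iii)
    constructor
    · rintro ⟨L, hL⟩
      have hS := hi_sing L hL
      have hLL := hidem L hS
      refine ⟨⟨L, by rw [hS]; rfl⟩, by rw [hS]; exact isCompact_singleton, ?_⟩
      intro P hP R hR x
      have hPL : P = L := by
        have := hP.1; rwa [hS, Set.mem_singleton_iff] at this
      have hRL : R = L := by rwa [hS, Set.mem_singleton_iff] at hR
      rw [hPL, hRL]
      calc L (L x) = (L * L) x := rfl
        _ = L x := by rw [hLL]
    · rintro ⟨hne, hcpt, h3⟩
      apply hcompact_i hne hcpt
      intro P hP s x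
      have hTP : T s * P ∈ sgAtInfty T := T_mul_mem hTmul hM hM0 hP.1 s
      have h := h3 P hP (T s * P) hTP x
      -- (T s * P) (P x) = P x, and P * P = P since P is neutral
      have hPP : P * P = P := (hP.2 P hP.1).1
      have : (T s * P) (P x) = T s (P x) := by
        show T s (P (P x)) = T s (P x)
        congr 1
        calc P (P x) = (P * P) x := rfl
          _ = P x := by rw [hPP]
      rw [this] at h
      exact h
  · -- (i) ↔ (iv)
    constructor
    · rintro ⟨L, hL⟩
      have hS := hi_sing L hL
      refine ⟨⟨L, by rw [hS]; rfl⟩, by rw [hS]; exact isCompact_singleton, ?_⟩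
      intro P hP s x
      have hPL : P = L := by
        have := hP.1; rwa [hS, Set.mem_singleton_iff] at this
      subst hPL
      have hTP : T s * P ∈ sgAtInfty T := T_mul_mem hTmul hM hM0 hP.1 s
      have hTPe : T s * P = P := by rwa [hS, Set.mem_singleton_iff] at hTP
      calc T s (P x) = (T s * P) x := rfl
        _ = P x := by rw [hTPe]
    · rintro ⟨hne, hcpt, h4⟩
      exact hcompact_i hne hcpt h4
  · -- limit equals the projection at infinity
    rintro ⟨L, hL⟩ P hP
    have hS := hi_sing L hL
    have hPL : P = L := by
      have := hP.1; rwa [hS, Set.mem_singleton_iff] at this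
    subst hPL
    exact hL
end

section
/- There exists a directed set J and a net (n_j)_{j∈J} of natural numbers that is cofinal in ℕ (i.e. for every m ∈ ℕ one has n_j ≥ m eventually) such that for every complex number λ with |λ| = 1 the net (λ^{n_j})_{j∈J} converges to 1. -/
open Filter Topology

private lemma key10 (S : Finset ℂ) (hS : ∀ l ∈ S, ‖l‖ = 1) (m : ℕ) {ε : ℝ} (hε : 0 < ε) :
    ∃ n : ℕ, m ≤ n ∧ ∀ l ∈ S, ‖l ^ n - 1‖ < ε := by
  classical
  set g : ℕ → (S → ℂ) := fun i l => (l : ℂ) ^ (i * (m + 1)) with hg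
  have hmem : ∀ i, g i ∈ Metric.closedBall (0 : S → ℂ) 1 := by
    intro i
    rw [Metric.mem_closedBall, dist_pi_le_iff zero_le_one]
    intro l
    simp [g, dist_eq_norm, norm_pow, hS l l.2]
  obtain ⟨L, _, φ, hφ, hconv⟩ :=
    (isCompact_closedBall (0 : S → ℂ) 1).tendsto_subseq hmem
  have hC : CauchySeq (g ∘ φ) := hconv.cauchySeq
  obtain ⟨N, hN⟩ := Metric.cauchySeq_iff.1 hC ε hε
  have hlt : φ N < φ (N + 1) := hφ (Nat.lt_succ_self N)
  have h1 : 1 ≤ φ (N + 1) - φ N := by omega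
  refine ⟨(φ (N + 1) - φ N) * (m + 1), ?_, ?_⟩
  · calc m ≤ 1 * (m + 1) := by omega
      _ ≤ (φ (N + 1) - φ N) * (m + 1) := Nat.mul_le_mul_right _ h1
  · intro l hl
    have hdist := hN (N + 1) (Nat.le_succ N) N le_rfl
    have hcoord : dist (g (φ (N + 1)) ⟨l, hl⟩) (g (φ N) ⟨l, hl⟩)
        ≤ dist ((g ∘ φ) (N + 1)) ((g ∘ φ) N) := dist_le_pi_dist _ _ _
    have hkey : ‖l ^ (φ (N + 1) * (m + 1)) - l ^ (φ N * (m + 1))‖ < ε := by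
      have : dist (g (φ (N + 1)) ⟨l, hl⟩) (g (φ N) ⟨l, hl⟩) < ε := lt_of_le_of_lt hcoord hdist
      simpa [g, dist_eq_norm] using this
    have hsplit : φ (N + 1) * (m + 1) = φ N * (m + 1) + (φ (N + 1) - φ N) * (m + 1) := by
      rw [← Nat.add_mul, Nat.add_sub_cancel' hlt.le]
    have : l ^ (φ (N + 1) * (m + 1)) - l ^ (φ N * (m + 1))
        = l ^ (φ N * (m + 1)) * (l ^ ((φ (N + 1) - φ N) * (m + 1)) - 1) := by
      rw [hsplit, pow_add]; ring
    rw [this, norm_mul, norm_pow, hS l hl, one_pow, one_mul] at hkey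
    exact hkey

/-- There exist a directed set `J` and a net `(n_j)_{j∈J}` of natural numbers
that is cofinal in `ℕ` (for every `m` one has `n_j ≥ m` eventually) such that for every complex
number `λ` of modulus one the net `(λ^{n_j})_{j∈J}` converges to `1`. -/
theorem statement10 :
    ∃ (J : Type) (instJ : Preorder J),
      Nonempty J ∧
      (∀ a b : J, ∃ c : J, instJ.le a c ∧ instJ.le b c) ∧
      ∃ n : J → ℕ,
        (∀ m : ℕ, ∀ᶠ j in (@Filter.atTop J instJ), m ≤ n j) ∧
        ∀ l : ℂ, ‖l‖ = 1 →
          Tendsto (fun j => l ^ (n j)) (@Filter.atTop J instJ) (𝓝 1) := by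
  classical
  refine ⟨ℕ × Finset ℂ, inferInstance, ⟨(0, ∅)⟩, ?_, ?_⟩
  · intro a b
    exact ⟨a ⊔ b, le_sup_left, le_sup_right⟩
  · choose f hf1 hf2 using fun (j : ℕ × Finset ℂ) =>
      key10 (j.2.filter (fun l => ‖l‖ = 1))
        (fun l hl => (Finset.mem_filter.1 hl).2) j.1
        (ε := 1 / (j.1 + 1)) (by positivity)
    refine ⟨f, ?_, ?_⟩
    · intro m
      refine eventually_atTop.2 ⟨(m, ∅), fun j hj => ?_⟩
      exact le_trans hj.1 (hf1 j)
    · intro l hl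
      rw [Metric.tendsto_nhds]
      intro ε hε
      obtain ⟨m, hm⟩ := exists_nat_one_div_lt hε
      refine eventually_atTop.2 ⟨(m, {l}), fun j hj => ?_⟩
      have hlj : l ∈ j.2.filter (fun l => ‖l‖ = 1) :=
        Finset.mem_filter.2 ⟨hj.2 (Finset.mem_singleton_self l), hl⟩
      have hlt : ‖l ^ f j - 1‖ < 1 / (j.1 + 1) := hf2 j l hlj
      have hmj : (m : ℝ) ≤ j.1 := by exact_mod_cast hj.1
      calc dist (l ^ f j) 1 = ‖l ^ f j - 1‖ := dist_eq_norm _ _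
        _ < 1 / (j.1 + 1) := hlt
        _ ≤ 1 / (m + 1) := by
            apply one_div_le_one_div_of_le (by positivity)
            linarith
        _ < ε := hm
end

section
/- Let E be a complex Banach space and let 𝒢 ⊆ L(E) be a subgroup of the group of invertible bounded linear operators on E which is compact in the operator norm topology and divisible (for each g ∈ 𝒢 and n ∈ ℕ there exists h ∈ 𝒢 with h^n = g). If for each T ∈ 𝒢 every spectral value of T is a root of unity, then 𝒢 = {id_E}. -/
/-!
The spectral values of the elements of a compact subset of a Banach algebra form a closed set,
by upper semicontinuity of the spectrum. If some `a ∈ 𝒢` had a spectral value `μ ≠ 1`, then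
`N!`-th roots of `a` in `𝒢` would have spectral values that are roots of unity of order `> N`,
whose powers come within `2π / N` of `exp i`; so `exp i`, which is not a root of unity, would be a
spectral value of some element of `𝒢`. Hence every `a ∈ 𝒢` has spectrum `{1}`.

The Cesàro means `s` of the powers of `a` then also have spectrum `{1}`, and by compactness they
accumulate at an idempotent `p` with `a p = p`. For `s` close to `p`,
`1 - s = (1 - p) (1 - (s - p))` writes the idempotent `1 - p` as the quasinilpotent `1 - s` times
an invertible element commuting with it, and Gelfand's formula forces `1 - p = 0`. So
`a = a p = p = 1`.
-/

open Filter Topology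

section RootsOfUnity

open Complex

theorem Complex.not_isOfFinOrder_exp_I : ¬ IsOfFinOrder (exp I) := by
  rw [isOfFinOrder_iff_pow_eq_one]
  rintro ⟨n, hn, h⟩
  rw [← exp_nat_mul, exp_eq_one_iff] at h
  obtain ⟨m, hm⟩ := h
  have hnm : (n : ℝ) = m * (2 * Real.pi) := by simpa using congrArg im hm
  have hm0 : (m : ℝ) ≠ 0 := by
    rintro h0
    rw [h0, zero_mul, Nat.cast_eq_zero] at hnm
    omega
  apply irrational_pi.ne_rat (n / (2 * m))
  push_cast
  field_simp
  linarith

theorem IsPrimitiveRoot.exists_norm_pow_sub_exp_le {ν : ℂ} {d : ℕ} (hν : IsPrimitiveRoot ν d)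
    (hd : 0 < d) {θ : ℝ} (hθ : 0 ≤ θ) :
    ∃ e : ℕ, ‖ν ^ e - exp (θ * I)‖ ≤ 2 * Real.pi / d := by
  have : NeZero d := ⟨hd.ne'⟩
  obtain ⟨j, -, hj⟩ := hν.eq_pow_of_pow_eq_one (isPrimitiveRoot_exp d hd.ne').pow_eq_one
  set k := ⌊θ * d / (2 * Real.pi)⌋₊
  have hpow : ν ^ (j * k) = exp ((2 * Real.pi * k / d : ℝ) * I) := by
    rw [pow_mul, hj, ← exp_nat_mul]
    push_cast
    ring_nf
  refine ⟨j * k, ?_⟩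
  have hk := Nat.floor_le (a := θ * d / (2 * Real.pi)) (by positivity)
  have hk' := Nat.lt_floor_add_one (θ * d / (2 * Real.pi))
  have hd' : (0 : ℝ) < d := by exact_mod_cast hd
  have hle : 2 * Real.pi * k / d ≤ θ := by
    rw [div_le_iff₀ hd']
    rw [le_div_iff₀ Real.two_pi_pos] at hk
    linarith
  have hlt : θ < 2 * Real.pi * k / d + 2 * Real.pi / d := by
    rw [← add_div, lt_div_iff₀ hd']
    rw [div_lt_iff₀ Real.two_pi_pos] at hk'
    linarith
  have hdist : |2 * Real.pi * k / d - θ| ≤ 2 * Real.pi / d := by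
    rw [abs_le]
    constructor <;> linarith [div_nonneg Real.two_pi_pos.le hd'.le]
  calc ‖ν ^ (j * k) - exp (θ * I)‖
      = ‖exp (θ * I) * (exp (I * (2 * Real.pi * k / d - θ : ℝ)) - 1)‖ := by
        rw [hpow, mul_sub, mul_one, ← exp_add]
        push_cast
        ring_nf
    _ ≤ 1 * ‖(2 * Real.pi * k / d - θ : ℝ)‖ := by
        rw [norm_mul, norm_exp_ofReal_mul_I]
        exact mul_le_mul_of_nonneg_left Real.norm_exp_I_mul_ofReal_sub_one_le zero_le_one
    _ ≤ 2 * Real.pi / d := by rwa [one_mul, Real.norm_eq_abs]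

end RootsOfUnity

theorem IsCompact.isClosed_biUnion_spectrum {𝕜 A : Type*} [NormedField 𝕜] [ProperSpace 𝕜]
    [NormedRing A] [NormedAlgebra 𝕜 A] [CompleteSpace A] {K : Set A} (hK : IsCompact K) :
    IsClosed (⋃ a ∈ K, spectrum 𝕜 a) := by
  refine IsSeqClosed.isClosed fun z z₀ hz hz₀ => ?_
  simp only [Set.mem_iUnion, exists_prop] at hz
  choose a haK haz using hz
  obtain ⟨a₀, ha₀, φ, hφ, hlim⟩ := hK.tendsto_subseq haK
  exact Set.mem_biUnion ha₀ <| UpperHemicontinuousAt.mem_of_tendsto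
    (upperHemicontinuous_spectrum 𝕜 A a₀)
    (spectrum.isClosed a₀) hlim (.of_forall fun n => haz (φ n)) (hz₀.comp hφ.tendsto_atTop)

theorem Submonoid.exists_mem_spectrum_lt_orderOf {𝕜 A : Type*} [Field 𝕜] [IsAlgClosed 𝕜]
    [Ring A] [Algebra 𝕜 A] (S : Submonoid A)
    (hdiv : ∀ a ∈ S, ∀ n : ℕ, 0 < n → ∃ b ∈ S, b ^ n = a)
    (hfin : ∀ a ∈ S, ∀ μ ∈ spectrum 𝕜 a, IsOfFinOrder μ)
    {a : A} (ha : a ∈ S) {μ : 𝕜} (hμ : μ ∈ spectrum 𝕜 a) (hμ1 : μ ≠ 1) (N : ℕ) :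
    ∃ b ∈ S, ∃ ν ∈ spectrum 𝕜 b, N < orderOf ν := by
  obtain ⟨b, hb, rfl⟩ := hdiv a ha N.factorial N.factorial_pos
  rw [spectrum.map_pow_of_pos b N.factorial_pos] at hμ
  obtain ⟨ν, hν, rfl⟩ := hμ
  refine ⟨b, hb, ν, hν, not_le.1 fun hle => hμ1 ?_⟩
  exact orderOf_dvd_iff_pow_eq_one.1 <| Nat.dvd_factorial (hfin b hb ν hν).orderOf_pos hle

section Cesaro

variable {𝒜 : Type*} [NormedRing 𝒜] [NormedAlgebra ℂ 𝒜]

noncomputable def cesaroMean (a : 𝒜) (n : ℕ) : 𝒜 := (n : ℂ)⁻¹ • ∑ k ∈ Finset.range n, a ^ k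

theorem cesaroMean_mem_convexHull (a : 𝒜) {n : ℕ} (hn : 0 < n) :
    cesaroMean a n ∈ convexHull ℝ (Set.range (a ^ · : ℕ → 𝒜)) := by
  have hsmul : cesaroMean a n = ∑ k ∈ Finset.range n, (n : ℝ)⁻¹ • a ^ k := by
    rw [cesaroMean, Finset.smul_sum]
    congr 1 with k
    rw [← Complex.coe_smul]
    push_cast
    rfl
  rw [hsmul]
  refine (convex_convexHull ℝ _).sum_mem (fun _ _ => by positivity) ?_
    fun k _ => subset_convexHull ℝ _ ⟨k, rfl⟩
  rw [Finset.sum_const, Finset.card_range, nsmul_eq_mul, mul_inv_cancel₀ (by positivity)]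

theorem mul_cesaroMean_sub (a : 𝒜) (n : ℕ) :
    a * cesaroMean a n - cesaroMean a n = (n : ℂ)⁻¹ • (a ^ n - 1) := by
  rw [cesaroMean, mul_smul_comm, ← smul_sub, ← mul_geom_sum, sub_mul, one_mul]

theorem commute_cesaroMean (a : 𝒜) (n : ℕ) : Commute a (cesaroMean a n) :=
  (Commute.sum_right _ _ _ fun k _ => Commute.self_pow a k).smul_right _

theorem cesaroMean_mul_eq_of_mul_eq {a p : 𝒜} (hap : a * p = p) {n : ℕ} (hn : 0 < n) :
    cesaroMean a n * p = p := by
  have hpow (k : ℕ) : a ^ k * p = p := by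
    induction k with
    | zero => rw [pow_zero, one_mul]
    | succ k ih => rw [pow_succ, mul_assoc, hap, ih]
  rw [cesaroMean, smul_mul_assoc, Finset.sum_mul, Finset.sum_congr rfl fun k _ => hpow k,
    Finset.sum_const, Finset.card_range, ← Nat.cast_smul_eq_nsmul ℂ, smul_smul,
    inv_mul_cancel₀ (Nat.cast_ne_zero.2 hn.ne'), one_smul]

theorem mul_cesaroMean_eq_of_mul_eq {a p : 𝒜} (hpa : p * a = p) {n : ℕ} (hn : 0 < n) :
    p * cesaroMean a n = p := by
  have hpow (k : ℕ) : p * a ^ k = p := by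
    induction k with
    | zero => rw [pow_zero, mul_one]
    | succ k ih => rw [pow_succ, ← mul_assoc, ih, hpa]
  rw [cesaroMean, mul_smul_comm, Finset.mul_sum, Finset.sum_congr rfl fun k _ => hpow k,
    Finset.sum_const, Finset.card_range, ← Nat.cast_smul_eq_nsmul ℂ, smul_smul,
    inv_mul_cancel₀ (Nat.cast_ne_zero.2 hn.ne'), one_smul]

theorem spectrum_cesaroMean {a : 𝒜} (hσ : spectrum ℂ a = {1}) {n : ℕ} (hn : 0 < n) :
    spectrum ℂ (cesaroMean a n) = {1} := by
  have haeval : cesaroMean a n =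
      Polynomial.aeval a (Polynomial.C (n : ℂ)⁻¹ * ∑ k ∈ Finset.range n, Polynomial.X ^ k) := by
    simp [cesaroMean, Algebra.smul_def]
  rw [haeval, spectrum.map_polynomial_aeval_of_nonempty a _ (hσ ▸ Set.singleton_nonempty 1), hσ,
    Set.image_singleton]
  simp [inv_mul_cancel₀ (Nat.cast_ne_zero.2 hn.ne' : (n : ℂ) ≠ 0)]

theorem tendsto_mul_cesaroMean_sub {a : 𝒜}
    (hbdd : Bornology.IsBounded (Set.range (a ^ · : ℕ → 𝒜))) :
    Tendsto (fun n => a * cesaroMean a n - cesaroMean a n) atTop (𝓝 0) := by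
  obtain ⟨M, hM⟩ := hbdd.exists_norm_le
  have hle (n : ℕ) : ‖a * cesaroMean a n - cesaroMean a n‖ ≤ (M + ‖(1 : 𝒜)‖) * (n : ℝ)⁻¹ := by
    rw [mul_cesaroMean_sub, norm_smul, norm_inv, Complex.norm_natCast, mul_comm]
    gcongr
    exact (norm_sub_le _ _).trans (by gcongr; exact hM _ ⟨n, rfl⟩)
  exact squeeze_zero_norm hle <| by
    simpa using tendsto_inv_atTop_nhds_zero_nat.const_mul (M + ‖(1 : 𝒜)‖)

end Cesaro

section BanachAlgebra

variable {𝒜 : Type*} [NormedRing 𝒜] [NormedAlgebra ℂ 𝒜] [CompleteSpace 𝒜]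

theorem Submonoid.spectrum_subset_one_of_isCompact (S : Submonoid 𝒜) (hS : IsCompact (S : Set 𝒜))
    (hdiv : ∀ a ∈ S, ∀ n : ℕ, 0 < n → ∃ b ∈ S, b ^ n = a)
    (hfin : ∀ a ∈ S, ∀ μ ∈ spectrum ℂ a, IsOfFinOrder μ) {a : 𝒜} (ha : a ∈ S) :
    spectrum ℂ a ⊆ {1} := by
  intro μ hμ
  by_contra hμ1
  have hexp : Complex.exp Complex.I ∈ ⋃ b ∈ (S : Set 𝒜), spectrum ℂ b := by
    refine (Metric.mem_of_closed' hS.isClosed_biUnion_spectrum).2 fun ε hε => ?_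
    obtain ⟨N, hN⟩ := exists_nat_gt (2 * Real.pi / ε)
    obtain ⟨b, hb, ν, hν, hNν⟩ := S.exists_mem_spectrum_lt_orderOf hdiv hfin ha hμ hμ1 N
    have hpos : 0 < orderOf ν := by omega
    obtain ⟨e, he⟩ := (IsPrimitiveRoot.orderOf ν).exists_norm_pow_sub_exp_le hpos zero_le_one
    refine ⟨ν ^ e, Set.mem_biUnion (S.pow_mem hb e) (spectrum.pow_mem_pow b e hν), ?_⟩
    rw [dist_comm, dist_eq_norm]
    calc ‖ν ^ e - Complex.exp Complex.I‖ ≤ 2 * Real.pi / orderOf ν := by simpa using he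
      _ < ε := by
        rw [div_lt_comm₀ (by exact_mod_cast hpos) hε]
        exact hN.trans (by exact_mod_cast hNν)
  obtain ⟨b, hb, hexp⟩ := Set.mem_iUnion₂.1 hexp
  exact Complex.not_isOfFinOrder_exp_I (hfin b hb _ hexp)

theorem tendsto_norm_pow_rpow_one_div_of_spectralRadius_eq_zero {y : 𝒜}
    (hy : spectralRadius ℂ y = 0) :
    Tendsto (fun n : ℕ => ‖y ^ n‖ ^ (1 / n : ℝ)) atTop (𝓝 0) := by
  have := spectrum.pow_norm_pow_one_div_tendsto_nhds_spectralRadius y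
  rw [hy] at this
  replace := (ENNReal.tendsto_toReal ENNReal.zero_ne_top).comp this
  refine this.congr fun n => ?_
  simp [ENNReal.toReal_ofReal, Real.rpow_nonneg (norm_nonneg _)]

theorem IsIdempotentElem.eq_zero_of_eq_mul_of_spectralRadius_eq_zero {q y w : 𝒜}
    (hq : IsIdempotentElem q) (hyw : Commute y w) (hqyw : q = y * w)
    (hy : spectralRadius ℂ y = 0) : q = 0 := by
  have hlim : Tendsto (fun n : ℕ => ‖y ^ n‖ ^ (1 / n : ℝ) * ‖w‖) atTop (𝓝 0) := by
    simpa using (tendsto_norm_pow_rpow_one_div_of_spectralRadius_eq_zero hy).mul_const ‖w‖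
  have hbound : ∀ᶠ n : ℕ in atTop, ‖q‖ ≤ (1 / 2 : ℝ) ^ n := by
    filter_upwards [hlim.eventually (gt_mem_nhds (by norm_num : (0 : ℝ) < 1 / 2)),
      eventually_gt_atTop 0] with n hn hn0
    calc ‖q‖ = ‖y ^ n * w ^ n‖ := by
          rw [← hyw.mul_pow, ← hqyw, ← Nat.sub_add_cancel hn0, hq.pow_succ_eq]
      _ ≤ ‖y ^ n‖ * ‖w‖ ^ n := (norm_mul_le _ _).trans <| by
          gcongr
          exact norm_pow_le' w hn0
      _ = (‖y ^ n‖ ^ (1 / n : ℝ) * ‖w‖) ^ n := by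
          rw [mul_pow, one_div, Real.rpow_inv_natCast_pow (norm_nonneg _) hn0.ne']
      _ ≤ (1 / 2 : ℝ) ^ n := by gcongr
  exact norm_le_zero_iff.1 <|
    ge_of_tendsto (tendsto_pow_atTop_nhds_zero_of_lt_one (by norm_num) (by norm_num)) hbound

theorem IsIdempotentElem.eq_one_of_norm_sub_lt_one {p s : 𝒜} (hp : IsIdempotentElem p)
    (hsp : s * p = p) (hps : p * s = p) (hs : spectrum ℂ s = {1}) (hnorm : ‖s - p‖ < 1) :
    p = 1 := by
  set u := Units.oneSub (s - p) hnorm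
  have hfac : 1 - s = (1 - p) * u := by
    simp only [u, Units.val_oneSub]
    noncomm_ring
    rw [hp.eq, hps]
    abel
  have hcomm : Commute (1 - s) u := by
    simp only [u, Units.val_oneSub]
    refine Commute.sub_right (Commute.one_right _) (Commute.sub_right ?_ ?_)
    · exact (Commute.one_left _).sub_left (Commute.refl s)
    · exact (Commute.one_left _).sub_left (hsp.trans hps.symm)
  have hrad : spectralRadius ℂ (1 - s) = 0 := by
    rw [spectralRadius, ← map_one (algebraMap ℂ 𝒜), ← spectrum.singleton_sub_eq, hs]
    simp
  have hq := hp.one_sub.eq_zero_of_eq_mul_of_spectralRadius_eq_zero hcomm.units_inv_right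
    (by rw [hfac, Units.mul_inv_cancel_right]) hrad
  exact (sub_eq_zero.1 hq).symm

theorem eq_one_of_totallyBounded_range_pow {a : 𝒜}
    (horb : TotallyBounded (Set.range (a ^ · : ℕ → 𝒜))) (hσ : spectrum ℂ a ⊆ {1}) : a = 1 := by
  nontriviality 𝒜
  have hσ' : spectrum ℂ a = {1} := (spectrum.nonempty a).subset_singleton_iff.1 hσ
  have hK := (totallyBounded_convexHull.2 horb).closure.isCompact_of_isClosed isClosed_closure
  obtain ⟨p, -, φ, hφ, hlim⟩ :=
    hK.tendsto_subseq fun n => subset_closure (cesaroMean_mem_convexHull a n.succ_pos)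
  set ψ : ℕ → ℕ := fun i => φ i + 1
  change Tendsto (fun i => cesaroMean a (ψ i)) atTop (𝓝 p) at hlim
  have hψ : Tendsto ψ atTop atTop := (tendsto_add_atTop_nat 1).comp hφ.tendsto_atTop
  have hap : a * p = p := by
    rw [← sub_eq_zero]
    exact tendsto_nhds_unique ((hlim.const_mul a).sub hlim)
      ((tendsto_mul_cesaroMean_sub horb.isBounded).comp hψ)
  have hpa : p * a = p := by
    refine (tendsto_nhds_unique (hlim.mul_const a) ?_).trans hap
    simpa only [(commute_cesaroMean a _).eq] using hlim.const_mul a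
  have hpp : IsIdempotentElem p := tendsto_nhds_unique (hlim.mul_const p) <|
    tendsto_const_nhds.congr fun i => (cesaroMean_mul_eq_of_mul_eq hap (Nat.succ_pos _)).symm
  obtain ⟨i, hi⟩ :=
    ((hlim.sub_const p).norm.eventually (gt_mem_nhds (show ‖p - p‖ < 1 by simp))).exists
  have hp1 := hpp.eq_one_of_norm_sub_lt_one (cesaroMean_mul_eq_of_mul_eq hap (Nat.succ_pos _))
    (mul_cesaroMean_eq_of_mul_eq hpa (Nat.succ_pos _)) (spectrum_cesaroMean hσ' (Nat.succ_pos _))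
    hi
  simpa [hp1] using hap

theorem Submonoid.eq_bot_of_isCompact_of_divisible (S : Submonoid 𝒜)
    (hS : IsCompact (S : Set 𝒜)) (hdiv : ∀ a ∈ S, ∀ n : ℕ, 0 < n → ∃ b ∈ S, b ^ n = a)
    (hfin : ∀ a ∈ S, ∀ μ ∈ spectrum ℂ a, IsOfFinOrder μ) : S = ⊥ :=
  (Submonoid.eq_bot_iff_forall S).2 fun _ ha => eq_one_of_totallyBounded_range_pow
    (hS.totallyBounded.subset (Set.range_subset_iff.2 (S.pow_mem ha)))
    (S.spectrum_subset_one_of_isCompact hS hdiv hfin ha)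

end BanachAlgebra

theorem statement11_general {E : Type*} [NormedAddCommGroup E] [NormedSpace ℂ E] [CompleteSpace E]
    (G : Set (E →L[ℂ] E))
    (hone : (1 : E →L[ℂ] E) ∈ G)
    (hmul : ∀ A ∈ G, ∀ B ∈ G, A * B ∈ G)
    (hcp : IsCompact G)
    (hdiv : ∀ A ∈ G, ∀ n : ℕ, 0 < n → ∃ B ∈ G, B ^ n = A)
    (hspec : ∀ A ∈ G, ∀ μ ∈ spectrum ℂ A, ∃ n : ℕ, 0 < n ∧ μ ^ n = 1) :
    G = {1} := by
  let S : Submonoid (E →L[ℂ] E) :=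
    { carrier := G, mul_mem' := fun ha hb => hmul _ ha _ hb, one_mem' := hone }
  have hS : S = ⊥ := S.eq_bot_of_isCompact_of_divisible hcp hdiv
    fun A hA μ hμ => isOfFinOrder_iff_pow_eq_one.2 (hspec A hA μ hμ)
  simpa [S] using congrArg SetLike.coe hS

/-- Let `E` be a complex Banach space and `𝒢 ⊆ L(E)` a divisible subgroup of
the invertible operators which is compact in the operator norm topology. If for each `T ∈ 𝒢`
every spectral value of `T` is a root of unity, then `𝒢 = {id_E}`. -/
theorem statement11 {E : Type*} [NormedAddCommGroup E] [NormedSpace ℂ E] [CompleteSpace E]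
    (G : Set (E →L[ℂ] E))
    (hone : (1 : E →L[ℂ] E) ∈ G)
    (hmul : ∀ A ∈ G, ∀ B ∈ G, A * B ∈ G)
    (hinv : ∀ A ∈ G, ∃ B ∈ G, A * B = 1 ∧ B * A = 1)
    (hcp : IsCompact G)
    (hdiv : ∀ A ∈ G, ∀ n : ℕ, 0 < n → ∃ B ∈ G, B ^ n = A)
    (hspec : ∀ A ∈ G, ∀ μ ∈ spectrum ℂ A, ∃ n : ℕ, 0 < n ∧ μ ^ n = 1) :
    G = {1} :=
  statement11_general G hone hmul hcp hdiv hspec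
end

section
/- Let E be a Banach lattice and let 𝒢 ⊆ L(E) be a subgroup of the group of invertible bounded linear operators on E which is compact in the operator norm topology and divisible (for each g ∈ 𝒢 and n ∈ ℕ there exists h ∈ 𝒢 with h^n = g), and assume that each operator in 𝒢 is positive. Then 𝒢 = {id_E}. -/
/-!
Compactness makes `𝒢` bounded and makes the powers of each of its elements return arbitrarily
close to the identity. An invertible `T` with `T` and `T⁻¹` positive and `‖T - 1‖ < 1` keeps
`T u` disjoint from everything `u` is disjoint from; writing `T x - x = a - b` with
`a = (T x - x)⁺`, `b = (T x - x)⁻`, the element `a` is therefore disjoint from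
`∑_{i<n} Tⁱ b`, and `Tⁿ x - x = ∑_{i<n} Tⁱ a - ∑_{i<n} Tⁱ b` gives `‖a‖ ≤ ‖Tⁿ x - x‖`.
Recurrence of the powers forces `a = 0` for every `x`, so `T = 1`. Hence the identity is
isolated in `𝒢`, which is then a finite group, and every `g = h ^ |𝒢|` is the identity.
-/

open Filter Topology

section LatticeOrderedGroup

variable {α : Type*} [AddCommGroup α] [Lattice α] [IsOrderedAddMonoid α] {a b c : α}

lemma posPart_sub_eq_self_of_inf_eq_zero (h : a ⊓ b = 0) : (a - b)⁺ = a := by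
  rw [inf_eq_sub_posPart_sub, sub_eq_zero] at h
  exact h.symm

lemma inf_add_eq_zero (hb : a ⊓ b = 0) (hc : a ⊓ c = 0) : a ⊓ (b + c) = 0 := by
  have ha : 0 ≤ a := hb ▸ inf_le_left
  have hb₀ : 0 ≤ b := hb ▸ inf_le_right
  refine le_antisymm ?_ (le_inf ha (add_nonneg hb₀ (hc ▸ inf_le_right)))
  -- `a ⊓ (b + c) - b` lies below both `a` and `c`, hence below `a ⊓ c = 0`.
  have hsub : a ⊓ (b + c) - b ≤ 0 :=
    hc ▸ le_inf ((sub_le_self _ hb₀).trans inf_le_left) (sub_le_iff_le_add'.2 inf_le_right)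
  exact hb ▸ le_inf inf_le_left (sub_nonpos.1 hsub)

lemma inf_sum_eq_zero {ι : Type*} {s : Finset ι} {f : ι → α} (ha : 0 ≤ a)
    (hf : ∀ i ∈ s, a ⊓ f i = 0) : a ⊓ ∑ i ∈ s, f i = 0 :=
  Finset.sum_induction f (a ⊓ · = 0) (fun _ _ => inf_add_eq_zero) (inf_eq_right.2 ha) hf

end LatticeOrderedGroup

section PositiveOperator

variable {E : Type*} [NormedAddCommGroup E] [Lattice E] [HasSolidNorm E] [IsOrderedAddMonoid E]
  [NormedSpace ℝ E]

lemma eq_zero_of_inf_apply_eq_zero {T : E →L[ℝ] E} (hT : ‖T - 1‖ < 1) {w : E}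
    (hw : w ⊓ T w = 0) : w = 0 := by
  have hw₀ : 0 ≤ w := hw ▸ inf_le_left
  have hle : ‖w‖ ≤ ‖T - 1‖ * ‖w‖ :=
    calc ‖w‖ ≤ ‖w - T w‖ := by
          refine norm_le_norm_of_abs_le_abs ?_
          rw [abs_of_nonneg hw₀]
          conv_lhs => rw [← posPart_sub_eq_self_of_inf_eq_zero hw]
          exact sup_le (le_abs_self _) (abs_nonneg _)
      _ = ‖(T - 1) w‖ := by rw [norm_sub_rev]; rfl
      _ ≤ ‖T - 1‖ * ‖w‖ := (T - 1).le_opNorm w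
  exact norm_eq_zero.1 <| le_antisymm (by nlinarith [norm_nonneg w]) (norm_nonneg w)

variable {T S : E →L[ℝ] E}

lemma apply_inf_eq_zero_of_inf_eq_zero (hT : Monotone T) (hS : Monotone S) (hST : S * T = 1)
    (hTS : T * S = 1) (hsmall : ‖T - 1‖ < 1) {u v : E} (huv : u ⊓ v = 0) : T u ⊓ v = 0 := by
  have hu : 0 ≤ u := huv ▸ inf_le_left
  have hv : 0 ≤ v := huv ▸ inf_le_right
  set z := T u ⊓ v
  have hz : 0 ≤ z := le_inf (map_zero T ▸ hT hu) hv
  have hTSz : T (S z) = z := by rw [← mul_apply_eq_comp, hTS, one_apply_eq_self]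
  -- `S z` lies below `u` while `T (S z) = z` lies below `v`.
  have hw : S z ⊓ T (S z) = 0 := by
    rw [hTSz]
    refine le_antisymm ?_ (le_inf (map_zero S ▸ hS hz) hz)
    calc S z ⊓ z ≤ u ⊓ v := by
          refine inf_le_inf ?_ inf_le_right
          calc S z ≤ S (T u) := hS inf_le_left
            _ = u := by rw [← mul_apply_eq_comp, hST, one_apply_eq_self]
      _ = 0 := huv
  rw [← hTSz, eq_zero_of_inf_apply_eq_zero hsmall hw, map_zero]

lemma pow_apply_inf_eq_zero (hT : Monotone T) (hS : Monotone S) (hST : S * T = 1)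
    (hTS : T * S = 1) (hsmall : ‖T - 1‖ < 1) {u v : E} (huv : u ⊓ v = 0) (k : ℕ) :
    (T ^ k) u ⊓ v = 0 := by
  induction k with
  | zero => simpa using huv
  | succ k ih =>
    rw [pow_succ', mul_apply_eq_comp]
    exact apply_inf_eq_zero_of_inf_eq_zero hT hS hST hTS hsmall ih

lemma norm_posPart_apply_sub_le (hT : Monotone T) (hS : Monotone S) (hST : S * T = 1)
    (hTS : T * S = 1) (hsmall : ‖T - 1‖ < 1) (x : E) {n : ℕ} (hn : 0 < n) :
    ‖(T x - x)⁺‖ ≤ ‖(T ^ n) x - x‖ := by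
  set a := (T x - x)⁺
  set b := (T x - x)⁻
  set P := ∑ i ∈ Finset.range n, T ^ i
  have hpow : ∀ i y, 0 ≤ y → 0 ≤ (T ^ i) y := fun i y hy => by
    simpa [FunLike.coe_pow_eq_iterate] using hT.iterate i hy
  have hPab : (T ^ n) x - x = P a - P b := by
    calc (T ^ n) x - x = (P * (T - 1)) x := by rw [geom_sum_mul]; rfl
      _ = P a - P b := by rw [mul_apply_eq_comp, ← map_sub, posPart_sub_negPart]; rfl
  have hdisj : a ⊓ P b = 0 := by
    rw [sum_apply]
    refine inf_sum_eq_zero (posPart_nonneg _) fun i _ => ?_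
    rw [inf_comm]
    refine pow_apply_inf_eq_zero hT hS hST hTS hsmall ?_ i
    rw [inf_comm]
    exact posPart_inf_negPart_eq_zero _
  have hle : a ≤ P a := by
    rw [sum_apply]
    simpa using Finset.single_le_sum (f := fun i => (T ^ i) a)
      (fun i _ => hpow i a (posPart_nonneg _)) (Finset.mem_range.2 hn)
  rw [hPab]
  refine norm_le_norm_of_abs_le_abs ?_
  calc |a| = (a - P b)⁺ := by
        rw [abs_of_nonneg (posPart_nonneg _), posPart_sub_eq_self_of_inf_eq_zero hdisj]
    _ ≤ (P a - P b)⁺ := posPart_mono (sub_le_sub_right hle _)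
    _ ≤ |P a - P b| := sup_le (le_abs_self _) (abs_nonneg _)

lemma eq_one_of_one_mem_closure_pow (hT : Monotone T) (hS : Monotone S) (hST : S * T = 1)
    (hTS : T * S = 1) (hsmall : ‖T - 1‖ < 1)
    (hrec : (1 : E →L[ℝ] E) ∈ closure ((T ^ ·) '' Set.Ioi 0)) : T = 1 := by
  have hpart : ∀ x, (T x - x)⁺ = 0 := by
    intro x
    have hclosed : IsClosed {A : E →L[ℝ] E | ‖(T x - x)⁺‖ ≤ ‖A x - x‖} :=
      isClosed_le continuous_const (by fun_prop)
    have h := closure_minimal (by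
      rintro _ ⟨n, hn, rfl⟩
      exact norm_posPart_apply_sub_le hT hS hST hTS hsmall x hn) hclosed hrec
    simpa using h
  ext x
  have h₁ := posPart_eq_zero.1 (hpart x)
  have h₂ := posPart_eq_zero.1 (hpart (-x))
  rw [map_neg, neg_sub_neg, sub_nonpos] at h₂
  exact le_antisymm (sub_nonpos.1 h₁) h₂

end PositiveOperator

section NormedRing

variable {R : Type*} [NormedRing R] {U : Subgroup Rˣ}

lemma one_mem_closure_pow_of_isCompact (hU : IsCompact (Units.val '' (U : Set Rˣ))) {u : Rˣ}
    (hu : u ∈ U) : (1 : R) ∈ closure ((fun n : ℕ => (u : R) ^ n) '' Set.Ioi 0) := by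
  obtain ⟨C, hC⟩ := isBounded_iff_forall_norm_le.1 hU.isBounded
  obtain ⟨L, -, φ, hφ, hlim⟩ := hU.tendsto_subseq (x := fun n => (↑(u ^ n) : R))
    fun n => ⟨u ^ n, pow_mem hu n, rfl⟩
  have hgap : ∀ k, (u : R) ^ (φ (k + 1) - φ k) - 1 =
      ((↑(u ^ φ (k + 1)) : R) - ↑(u ^ φ k)) * ↑(u ^ φ k)⁻¹ := by
    intro k
    rw [sub_mul, Units.mul_inv, ← Units.val_mul, ← pow_sub _ (hφ k.lt_succ_self).le,
      Units.val_pow_eq_pow_val]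
  have hdiff : Tendsto (fun k => (↑(u ^ φ (k + 1)) : R) - ↑(u ^ φ k)) atTop (𝓝 0) := by
    simpa using (hlim.comp (tendsto_add_atTop_nat 1)).sub hlim
  have hbdd : IsBoundedUnder (· ≤ ·) atTop ((‖·‖) ∘ fun k => (↑(u ^ φ k)⁻¹ : R)) :=
    isBoundedUnder_of ⟨C, fun k => hC _ ⟨_, inv_mem (pow_mem hu _), rfl⟩⟩
  refine mem_closure_of_tendsto (b := atTop) (f := fun k => (u : R) ^ (φ (k + 1) - φ k)) ?_
    (Eventually.of_forall fun k => ⟨_, Nat.sub_pos_of_lt (hφ k.lt_succ_self), rfl⟩)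
  rw [← tendsto_sub_nhds_zero_iff]
  simpa only [hgap] using hdiff.zero_mul_isBoundedUnder_le hbdd

lemma finite_of_isCompact_of_norm_sub_one_lt (hU : IsCompact (Units.val '' (U : Set Rˣ)))
    (h1 : ∀ u ∈ U, ‖(u : R) - 1‖ < 1 → u = 1) : Finite U := by
  obtain ⟨C, hC₀, hC⟩ := hU.isBounded.exists_pos_norm_le
  have hsep : ∀ u ∈ U, ∀ v ∈ U, u ≠ v → C⁻¹ ≤ ‖(u : R) - v‖ := by
    intro u hu v hv huv
    have h : 1 ≤ ‖(↑(v⁻¹ * u) : R) - 1‖ := not_lt.1 fun h =>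
      huv (inv_mul_eq_one.1 (h1 (v⁻¹ * u) (mul_mem (inv_mem hv) hu) h)).symm
    rw [Units.val_mul, ← Units.inv_mul v, ← mul_sub] at h
    rw [inv_le_iff_one_le_mul₀' hC₀]
    calc 1 ≤ ‖(↑v⁻¹ : R) * (↑u - ↑v)‖ := h
      _ ≤ ‖(↑v⁻¹ : R)‖ * ‖(u : R) - ↑v‖ := norm_mul_le _ _
      _ ≤ C * ‖(u : R) - ↑v‖ := by gcongr; exact hC _ ⟨v⁻¹, inv_mem hv, rfl⟩
  have hdisc : IsDiscrete (Units.val '' (U : Set Rˣ)) := by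
    rw [isDiscrete_iff_discreteTopology]
    refine DiscreteTopology.of_forall_le_dist (inv_pos.2 hC₀) ?_
    rintro ⟨_, u, hu, rfl⟩ ⟨_, v, hv, rfl⟩ huv
    rw [Subtype.dist_eq, dist_eq_norm]
    exact hsep u hu v hv fun h => huv (by subst h; rfl)
  exact ((hU.finite hdisc).of_finite_image Units.val_injective.injOn).to_subtype

end NormedRing

theorem statement12_general {E : Type*} [NormedAddCommGroup E] [Lattice E] [HasSolidNorm E]
    [IsOrderedAddMonoid E] [NormedSpace ℝ E]
    (G : Set (E →L[ℝ] E))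
    (hone : (1 : E →L[ℝ] E) ∈ G)
    (hmul : ∀ A ∈ G, ∀ B ∈ G, A * B ∈ G)
    (hinv : ∀ A ∈ G, ∃ B ∈ G, A * B = 1 ∧ B * A = 1)
    (hcp : IsCompact G)
    (hdiv : ∀ A ∈ G, ∀ n : ℕ, 0 < n → ∃ B ∈ G, B ^ n = A)
    (hpos : ∀ A ∈ G, ∀ x : E, 0 ≤ x → 0 ≤ A x) :
    G = {1} := by
  let S : Submonoid (E →L[ℝ] E) :=
    { carrier := G, mul_mem' := fun ha hb => hmul _ ha _ hb, one_mem' := hone }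
  have hG : Units.val '' (S.units : Set (E →L[ℝ] E)ˣ) = G := by
    refine (Set.image_subset_iff.2 fun u hu => hu.1).antisymm fun A hA => ?_
    obtain ⟨B, hB, hAB, hBA⟩ := hinv A hA
    exact ⟨⟨A, B, hAB, hBA⟩, ⟨hA, hB⟩, rfl⟩
  have hmono : ∀ A ∈ G, Monotone A := fun A hA => (monotone_iff_map_nonneg A).2 (hpos A hA)
  have hisolated : ∀ u ∈ S.units, ‖(u : E →L[ℝ] E) - 1‖ < 1 → u = 1 := fun u hu h =>
    Units.ext <| eq_one_of_one_mem_closure_pow (hmono _ hu.1) (hmono _ hu.2) u.inv_mul u.mul_inv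
      h (one_mem_closure_pow_of_isCompact (hG ▸ hcp) hu)
  have := finite_of_isCompact_of_norm_sub_one_lt (hG ▸ hcp) hisolated
  refine Set.eq_singleton_iff_unique_mem.2 ⟨hone, fun g hg => ?_⟩
  obtain ⟨B, hB, rfl⟩ := hdiv g hg _ (Nat.card_pos (α := S.units))
  obtain ⟨u, hu, rfl⟩ := hG ▸ hB
  have hu1 := congrArg (fun v : S.units => ((v : (E →L[ℝ] E)ˣ) : E →L[ℝ] E))
    (pow_card_eq_one' (x := (⟨u, hu⟩ : S.units)))
  simpa only [SubgroupClass.coe_pow, Units.val_pow_eq_pow_val, OneMemClass.coe_one,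
    Units.val_one] using hu1

/-- Let `E` be a Banach lattice and `𝒢 ⊆ L(E)` a divisible subgroup of the
invertible operators which is compact in the operator norm topology and consists of positive
operators. Then `𝒢 = {id_E}`. -/
theorem statement12 {E : Type*} [NormedAddCommGroup E] [Lattice E] [HasSolidNorm E]
    [IsOrderedAddMonoid E] [NormedSpace ℝ E]
    [CompleteSpace E]
    (G : Set (E →L[ℝ] E))
    (hone : (1 : E →L[ℝ] E) ∈ G)
    (hmul : ∀ A ∈ G, ∀ B ∈ G, A * B ∈ G)
    (hinv : ∀ A ∈ G, ∃ B ∈ G, A * B = 1 ∧ B * A = 1)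
    (hcp : IsCompact G)
    (hdiv : ∀ A ∈ G, ∀ n : ℕ, 0 < n → ∃ B ∈ G, B ^ n = A)
    (hpos : ∀ A ∈ G, ∀ x : E, 0 ≤ x → 0 ≤ A x) :
    G = {1} :=
  statement12_general G hone hmul hinv hcp hdiv hpos
end

section
/- Let (E,E₊) be an ordered Banach space with E₊ ≠ {0} and let 𝒢 ⊆ L(E) be a norm-bounded subgroup of the group of invertible bounded linear operators on E. Assume that every operator in 𝒢 is positive and that for each f ∈ E₊ \ {0} there exists T ∈ 𝒢 such that Tf is an almost interior point of E₊. Then E is one-dimensional and 𝒢 = {id_E}. -/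
/-!
If `T f` is almost interior then so is `f = T⁻¹ (T f)`, because composing with the positive
operator `T⁻¹` keeps positive functionals positive and nonzero; so every nonzero `f ∈ E₊` is almost
interior. A Bishop–Phelps argument (Ekeland's variational principle, then a separation of the cone
from an open "drop" cone) turns a nonzero non-interior point of a closed cone in a Banach space into
a nonzero point at which some nonzero positive functional vanishes; hence every nonzero point of
`E₊` is interior. If `dim E ≥ 2`, then `E \ {0}` is connected and `E₊ \ {0}` is clopen in it, so
`E₊ = E`, contradicting `E₊ ∩ (-E₊) = {0}`. Thus `E` is a line, every `T ∈ 𝒢` acts as a scalar `c`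
with `cⁿ` and `c⁻ⁿ` bounded, so `|c| = 1`, and positivity excludes `c = -1`.
-/

open Filter Topology

/-- `f` is an almost interior point of the cone `C`: `f ∈ C` and every nonzero positive
continuous functional is strictly positive at `f`. -/
def AlmostInteriorPoint {E : Type*} [NormedAddCommGroup E] [NormedSpace ℝ E]
    (C : Set E) (f : E) : Prop :=
  f ∈ C ∧ ∀ φ : E →L[ℝ] ℝ, (∀ g ∈ C, 0 ≤ φ g) → φ ≠ 0 → 0 < φ f

open Set

theorem ekeland_variational_principle {X : Type*} [MetricSpace X] [CompleteSpace X]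
    {f : X → ℝ} (hf : LowerSemicontinuous f) (hbdd : BddBelow (range f)) {ε : ℝ} (hε : 0 < ε)
    (x₀ : X) : ∃ v, f v + ε * dist v x₀ ≤ f x₀ ∧ ∀ x, x ≠ v → f v < f x + ε * dist x v := by
  set S : X → Set X := fun y => {x | f x + ε * dist x y ≤ f y}
  have mem_S_self (y : X) : y ∈ S y := by simp [S]
  have S_subset {x y : X} (hxy : x ∈ S y) : S x ⊆ S y := by
    intro z hzx
    simp only [S, mem_ofPred_eq] at hxy hzx ⊢
    nlinarith [dist_triangle z x y]
  have S_closed (y : X) : IsClosed (S y) :=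
    (hf.add (continuous_const.mul (continuous_id.dist continuous_const)).lowerSemicontinuous
      ).isClosed_preimage (f y)
  have almost_min (y : X) (n : ℕ) : ∃ z ∈ S y, ∀ x ∈ S y, f z ≤ f x + 1 / (n + 1) := by
    obtain ⟨_, ⟨z, hz, rfl⟩, hlt⟩ :=
      Real.lt_sInf_add_pos ⟨f y, mem_image_of_mem f (mem_S_self y)⟩ Nat.one_div_pos_of_nat
    refine ⟨z, hz, fun x hx => hlt.le.trans ?_⟩
    gcongr
    exact csInf_le (hbdd.mono (image_subset_range _ _)) (mem_image_of_mem f hx)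
  -- Each `u (n + 1)` nearly minimises `f` on `S (u n)`, so the nested closed sets `S (u (n + 1))`
  -- have radius at most `1 / (n + 1) / ε` around `u (n + 1)` and shrink to a single point `v`.
  choose next next_mem next_le using almost_min
  let u : ℕ → X := fun n => Nat.rec x₀ (fun n y => next y n) n
  have S_antitone : Antitone fun n => S (u n) :=
    antitone_nat_of_succ_le fun n => S_subset (next_mem (u n) n)
  have dist_le (n : ℕ) (y : X) (hy : y ∈ S (u (n + 1))) :
      dist y (u (n + 1)) ≤ 1 / (n + 1) / ε := by
    have := next_le (u n) n y (S_antitone n.le_succ hy)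
    simp only [S, mem_ofPred_eq] at hy
    rw [le_div_iff₀ hε]
    linarith
  have mem_S_of_le {n m : ℕ} (h : n ≤ m) : u (m + 1) ∈ S (u (n + 1)) :=
    S_antitone (Nat.succ_le_succ h) (mem_S_self _)
  have radius_tendsto : Tendsto (fun n : ℕ => 1 / ((n : ℝ) + 1) / ε) atTop (𝓝 0) := by
    simpa using tendsto_one_div_add_atTop_nhds_zero_nat.div_const ε
  obtain ⟨v, hv⟩ := cauchySeq_tendsto_of_complete <|
    cauchySeq_of_le_tendsto_0' (s := fun n => u (n + 1)) _
      (fun n m h => by rw [dist_comm]; exact dist_le n _ (mem_S_of_le h)) radius_tendsto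
  have v_mem (n : ℕ) : v ∈ S (u (n + 1)) :=
    (S_closed _).mem_of_tendsto hv (eventually_atTop.2 ⟨n, fun m => mem_S_of_le⟩)
  refine ⟨v, S_antitone (Nat.zero_le 1) (v_mem 0), fun y hyv => ?_⟩
  by_contra! hy
  have hy_mem (n : ℕ) : y ∈ S (u (n + 1)) := S_subset (v_mem n) hy
  have hy_lim : Tendsto (fun n => u (n + 1)) atTop (𝓝 y) :=
    tendsto_iff_dist_tendsto_zero.2 <| squeeze_zero (fun _ => dist_nonneg)
      (fun n => by rw [dist_comm]; exact dist_le n y (hy_mem n)) radius_tendsto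
  exact hyv (tendsto_nhds_unique hy_lim hv)

theorem IsClosed.exists_ekeland {X : Type*} [MetricSpace X] [CompleteSpace X] {S : Set X}
    (hS : IsClosed S) {f : X → ℝ} (hf : Continuous f) (hbdd : BddBelow (f '' S)) {ε : ℝ}
    (hε : 0 < ε) {w : X} (hw : w ∈ S) :
    ∃ v ∈ S, f v + ε * dist v w ≤ f w ∧ ∀ c ∈ S, f v ≤ f c + ε * dist c v := by
  have : CompleteSpace S := hS.completeSpace_coe
  obtain ⟨⟨v, hvS⟩, hvw, hvmin⟩ := ekeland_variational_principle (f := fun x : S => f x)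
    (hf.comp continuous_subtype_val).lowerSemicontinuous (by rwa [← image_eq_range]) hε ⟨w, hw⟩
  refine ⟨v, hvS, hvw, fun c hc => ?_⟩
  obtain rfl | hcv := eq_or_ne c v
  · simp
  · exact (hvmin ⟨c, hc⟩ (by simpa using hcv)).le

section

variable {E : Type*} [NormedAddCommGroup E] [NormedSpace ℝ E]

def ProperCone.ofCombinations (C : Set E) (hC : IsClosed C) (h0 : (0 : E) ∈ C)
    (hcomb : ∀ a b : ℝ, 0 ≤ a → 0 ≤ b → ∀ x ∈ C, ∀ y ∈ C, a • x + b • y ∈ C) :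
    ProperCone ℝ E where
  carrier := C
  add_mem' hx hy := by simpa using hcomb 1 1 zero_le_one zero_le_one _ hx _ hy
  zero_mem' := h0
  smul_mem' c x hx := by simpa using hcomb c 0 c.2 le_rfl _ hx _ h0
  isClosed' := hC

theorem AlmostInteriorPoint.of_apply {C : Set E} {A B : E →L[ℝ] E} {f : E}
    (hf : AlmostInteriorPoint C (A f)) (hBA : B * A = 1) (hB : ∀ g ∈ C, B g ∈ C) (hfC : f ∈ C) :
    AlmostInteriorPoint C f := by
  have hBA_apply (x : E) : B (A x) = x := congr($hBA x)
  refine ⟨hfC, fun φ hφ hφ0 => ?_⟩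
  have hφB : φ.comp B ≠ 0 := fun h => hφ0 <| ContinuousLinearMap.ext fun x => by
    simpa [hBA_apply] using congr($h (A x))
  simpa [hBA_apply] using hf.2 (φ.comp B) (fun g hg => hφ _ (hB g hg)) hφB

theorem ProperCone.not_almostInteriorPoint_of_forall_le_add_norm (K : ProperCone ℝ E)
    {φ : E →L[ℝ] ℝ} {ε : ℝ} (hε : 0 ≤ ε) (hεφ : ε < ‖φ‖) {v : E}
    (hv : ∀ c ∈ K, φ v ≤ φ c + ε * ‖c - v‖) : ¬AlmostInteriorPoint K v := by
  rintro ⟨hvK, hai⟩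
  -- The hypothesis says that `v + Q` misses `K`; a functional separating them is positive on `K`,
  -- vanishes at `v` and is negative on the nonempty open cone `Q`.
  set Q : Set E := {h | φ h + ε * ‖h‖ < 0}
  have hQ_open : IsOpen Q := isOpen_lt (by fun_prop) continuous_const
  have hQ_convex : Convex ℝ Q := by
    simpa using ((φ : E →ₗ[ℝ] ℝ).convexOn convex_univ).add
      ((convexOn_norm convex_univ).smul hε) |>.convex_lt 0
  have hQ_smul {h : E} (hh : h ∈ Q) {t : ℝ} (ht : 0 < t) : t • h ∈ Q := by
    simp only [Q, mem_ofPred_eq, map_smul, smul_eq_mul, norm_smul,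
      Real.norm_of_nonneg ht.le] at hh ⊢
    nlinarith
  obtain ⟨h₀, hh₀⟩ : Q.Nonempty := by
    by_contra! hQ
    have hQ' (h : E) : 0 ≤ φ h + ε * ‖h‖ := not_lt.1 fun h' => hQ.subset h'
    have hφ_le : ‖φ‖ ≤ ε := φ.opNorm_le_bound hε fun h => by
      have h₁ := hQ' h
      have h₂ := hQ' (-h)
      rw [map_neg, norm_neg] at h₂
      rw [Real.norm_eq_abs, abs_le]
      constructor <;> linarith
    linarith
  have hdisj : Disjoint Q ((-v + ·) '' K) := by
    refine disjoint_left.2 ?_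
    rintro _ hhQ ⟨c, hc, rfl⟩
    have := hv c hc
    simp only [Q, mem_ofPred_eq, neg_add_eq_sub, map_sub] at hhQ
    linarith
  obtain ⟨g, u, hgQ, hgD⟩ :=
    geometric_hahn_banach_open hQ_convex hQ_open (K.convex.translate _) hdisj
  have hgK (c : E) (hc : c ∈ K) : u ≤ g c - g v := by
    simpa [neg_add_eq_sub] using hgD _ (mem_image_of_mem _ hc)
  have hu : 0 ≤ u := by
    by_contra! hu
    have hgh₀ : g h₀ < 0 := (hgQ h₀ hh₀).trans hu
    have := hgQ _ (hQ_smul hh₀ (div_pos_of_neg_of_neg hu hgh₀))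
    rw [map_smul, smul_eq_mul, div_mul_cancel₀ _ hgh₀.ne] at this
    exact lt_irrefl _ this
  have hu_le : u ≤ -g v := by simpa using hgK 0 K.zero_mem
  have hg_nonneg (c : E) (hc : c ∈ K) : 0 ≤ g c := by
    by_contra! hgc
    have ht : 0 ≤ (1 - u - g v) / -g c := div_nonneg (by linarith) (by linarith)
    have := hgK _ (K.smul_mem hc ht)
    rw [map_smul, smul_eq_mul, div_mul_eq_mul_div, div_neg,
      mul_div_cancel_right₀ _ hgc.ne] at this
    linarith
  have hgv : g v = 0 := le_antisymm (by linarith) (hg_nonneg v hvK)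
  have hg0 : g ≠ 0 := by
    rintro rfl
    have := hgQ h₀ hh₀
    simp only [zero_apply, neg_zero] at this hu_le
    linarith
  exact (hai g hg_nonneg hg0).ne' hgv

theorem ProperCone.mem_interior_of_forall_almostInteriorPoint [CompleteSpace E]
    (K : ProperCone ℝ E) (hai : ∀ v ∈ K, v ≠ 0 → AlmostInteriorPoint K v) {w : E} (hw : w ∈ K)
    (hw0 : w ≠ 0) : w ∈ interior (K : Set E) := by
  by_contra hint
  obtain ⟨z, hzw, hzK⟩ : ∃ z ∈ Metric.ball w (‖w‖ / 2), z ∉ K := not_subset.1 fun h =>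
    hint (mem_interior.2 ⟨_, h, Metric.isOpen_ball, Metric.mem_ball_self (by positivity)⟩)
  rw [Metric.mem_ball, dist_eq_norm'] at hzw
  obtain ⟨φ, hφK, hφz⟩ := K.hyperplane_separation_point hzK
  have hφ : 0 < ‖φ‖ := norm_pos_iff.2 (by rintro rfl; simp at hφz)
  have hφw : φ w < ‖φ‖ * ‖w - z‖ := calc
    φ w = φ z + φ (w - z) := by simp
    _ < ‖φ (w - z)‖ := by linarith [Real.le_norm_self (φ (w - z))]
    _ ≤ ‖φ‖ * ‖w - z‖ := φ.le_opNorm _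
  obtain ⟨v, hvK, hvw, hvmin⟩ := K.isClosed.exists_ekeland φ.continuous
    ⟨0, by rintro _ ⟨c, hc, rfl⟩; exact hφK c hc⟩ (half_pos hφ) hw
  simp only [dist_eq_norm] at hvw hvmin
  -- `v` stays within `2 φ w / ‖φ‖ < 2 ‖w - z‖ < ‖w‖` of `w`
  have hv0 : v ≠ 0 := by
    rintro rfl
    rw [map_zero, zero_sub, norm_neg] at hvw
    nlinarith
  exact K.not_almostInteriorPoint_of_forall_le_add_norm (by positivity) (by linarith) hvmin
    (hai v hvK hv0)

theorem finrank_eq_one_of_forall_ne_zero_mem_interior {S : Set E} (hS : IsClosed S)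
    (hint : ∀ x ∈ S, x ≠ 0 → x ∈ interior S) {f : E} (hf : f ∈ S) (hf' : -f ∉ S) :
    Module.finrank ℝ E = 1 := by
  have hf0 : f ≠ 0 := by rintro rfl; simp_all
  have : Nontrivial E := ⟨⟨f, 0, hf0⟩⟩
  refine Module.rank_eq_one_iff_finrank_eq_one.1
    (le_antisymm ?_ (Cardinal.one_le_iff_pos.2 rank_pos))
  by_contra! h
  have hsub : {0}ᶜ ⊆ interior S :=
    (isConnected_compl_singleton_of_one_lt_rank h 0).isPreconnected.subset_left_of_subset_union
      isOpen_interior hS.isOpen_compl (disjoint_compl_right.mono_left interior_subset)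
      (fun x hx => by by_cases hxS : x ∈ S; exacts [.inl (hint x hxS hx), .inr hxS])
      ⟨f, hf0, hint f hf hf0⟩
  exact hf' (interior_subset (hsub (neg_ne_zero.2 hf0)))

theorem abs_le_one_of_apply_eq_smul {T : E →L[ℝ] E} {M : ℝ} (hT : ∀ n : ℕ, ‖T ^ n‖ ≤ M) {f : E}
    (hf : f ≠ 0) {c : ℝ} (hTf : T f = c • f) : |c| ≤ 1 := by
  have hpow (n : ℕ) : (T ^ n) f = c ^ n • f := by
    induction n with
    | zero => simp
    | succ n ih => simp [pow_succ, ih, hTf, smul_smul, mul_comm]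
  by_contra! hc
  obtain ⟨n, hn⟩ := pow_unbounded_of_one_lt M hc
  have : |c| ^ n * ‖f‖ ≤ M * ‖f‖ := calc
    |c| ^ n * ‖f‖ = ‖(T ^ n) f‖ := by rw [hpow, norm_smul, norm_pow, Real.norm_eq_abs]
    _ ≤ ‖T ^ n‖ * ‖f‖ := (T ^ n).le_opNorm f
    _ ≤ M * ‖f‖ := by gcongr; exact hT n
  exact hn.not_ge (le_of_mul_le_mul_right this (norm_pos_iff.2 hf))

theorem eq_one_of_finrank_eq_one_of_pow_bounded (hE : Module.finrank ℝ E = 1) {T B : E →L[ℝ] E}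
    (hBT : B * T = 1) {M : ℝ} (hT : ∀ n : ℕ, ‖T ^ n‖ ≤ M) (hB : ∀ n : ℕ, ‖B ^ n‖ ≤ M) {f : E}
    (hTf : T f ≠ -f) : T = 1 := by
  have hf : f ≠ 0 := by rintro rfl; simp at hTf
  have hspan := (finrank_eq_one_iff_of_nonzero' f hf).1 hE
  obtain ⟨c, hc⟩ := hspan (T f)
  obtain ⟨d, hd⟩ := hspan (B f)
  have hdc : d * c = 1 := by
    refine smul_left_injective ℝ hf ?_
    simpa [mul_smul, ← hc, ← hd, smul_comm c] using congr($hBT f)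
  have hc1 : |c| = 1 := by
    have := abs_le_one_of_apply_eq_smul hT hf hc.symm
    have := abs_le_one_of_apply_eq_smul hB hf hd.symm
    have := congr_arg abs hdc
    rw [abs_mul, abs_one] at this
    nlinarith [abs_nonneg c, abs_nonneg d]
  obtain rfl | rfl := abs_eq zero_le_one |>.1 hc1
  · ext x
    obtain ⟨a, rfl⟩ := hspan x
    simp [← hc]
  · exact absurd (by rw [← hc, neg_one_smul]) hTf

end

/-- Let `(E, E₊)` be an ordered Banach space with `E₊ ≠ {0}` and let
`𝒢 ⊆ L(E)` be a norm-bounded subgroup of the invertible operators consisting of positive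
operators such that every `0 ≠ f ∈ E₊` is mapped by some `T ∈ 𝒢` to an almost interior point of
`E₊`. Then `E` is one-dimensional and `𝒢 = {id_E}`. -/
theorem statement15 {E : Type*} [NormedAddCommGroup E] [NormedSpace ℝ E] [CompleteSpace E]
    (C : Set E) (hCcl : IsClosed C)
    (hCcone : ∀ a b : ℝ, 0 ≤ a → 0 ≤ b → ∀ x ∈ C, ∀ y ∈ C, a • x + b • y ∈ C)
    (hCpointed : C ∩ (-C) = {0})
    (hCne : C ≠ {0})
    (G : Set (E →L[ℝ] E))
    (hone : (1 : E →L[ℝ] E) ∈ G)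
    (hmul : ∀ A ∈ G, ∀ B ∈ G, A * B ∈ G)
    (hinv : ∀ A ∈ G, ∃ B ∈ G, A * B = 1 ∧ B * A = 1)
    (hGbdd : ∃ M : ℝ, ∀ A ∈ G, ‖A‖ ≤ M)
    (hpos : ∀ A ∈ G, ∀ f ∈ C, A f ∈ C)
    (hstrong : ∀ f ∈ C, f ≠ 0 → ∃ A ∈ G, AlmostInteriorPoint C (A f)) :
    Module.finrank ℝ E = 1 ∧ G = {1} := by
  have h0 : (0 : E) ∈ C := (hCpointed.ge rfl).1
  let K := ProperCone.ofCombinations C hCcl h0 hCcone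
  obtain ⟨f₀, hf₀, hf₀'⟩ : ∃ f₀ ∈ C, -f₀ ∉ C := by
    by_contra! h
    refine hCne (eq_singleton_iff_unique_mem.2 ⟨h0, fun f hf => ?_⟩)
    have hf' : f ∈ C ∩ -C := ⟨hf, h f hf⟩
    rwa [hCpointed] at hf'
  have hai (f : E) (hf : f ∈ K) (hf0 : f ≠ 0) : AlmostInteriorPoint K f := by
    obtain ⟨A, hA, hAf⟩ := hstrong f hf hf0
    obtain ⟨B, hB, -, hBA⟩ := hinv A hA
    exact hAf.of_apply hBA (hpos B hB) hf
  have hrank : Module.finrank ℝ E = 1 := finrank_eq_one_of_forall_ne_zero_mem_interior hCcl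
    (fun _ => K.mem_interior_of_forall_almostInteriorPoint hai) hf₀ hf₀'
  obtain ⟨M, hM⟩ := hGbdd
  let S : Submonoid (E →L[ℝ] E) :=
    { carrier := G, mul_mem' := fun ha hb => hmul _ ha _ hb, one_mem' := hone }
  refine ⟨hrank, eq_singleton_iff_unique_mem.2 ⟨hone, fun T hT => ?_⟩⟩
  obtain ⟨B, hB, -, hBT⟩ := hinv T hT
  exact eq_one_of_finrank_eq_one_of_pow_bounded hrank hBT (fun n => hM _ (S.pow_mem hT n))
    (fun n => hM _ (S.pow_mem hB n)) fun h => hf₀' (h ▸ hpos T hT f₀ hf₀)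
end
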